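/- Consider the recursive construction F_0 := f_0, f_j := −(coefficient of t^j in 𝒟F_{j−1})/(j(1−j)), F_j := F_{j−1} + f_j t^j for j ≥ 2, where 𝒟 is a linear operator on R[[t]] with 𝒟(f t^j) ∈ j(1−j) f t^j + t^{j+1} R[[t]], and suppose 𝒟F_1 ∈ t² R[[t]]. Then for all j ≥ 1, 𝒟F_j ∈ t^{j+1} R[[t]], i.e., the inductively constructed formal solution solves the equation to one higher order at each step. -/

import Mathlib

open PowerSeries

/-- The recursive construction `F_j := F_{j-1} + f_j t^j` with
`f_j := -(coeff of t^j in 𝒟F_{j-1})/(j(1-j))` produces approximate solutions to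
one higher order at each step: `𝒟 F_j ≡ 0 mod t^{j+1}` for all `j ≥ 1`. -/
theorem formal_solution_construction (R : Type*) [CommRing R] [Algebra ℚ R]
    (D : PowerSeries R →ₗ[R] PowerSeries R)
    (hD : ∀ (f : R) (j : ℕ),
      (X : PowerSeries R) ^ (j + 1) ∣
        D (C f * X ^ j) - C (algebraMap ℚ R ((j : ℚ) * (1 - (j : ℚ)))) * (C f * X ^ j))
    (F : ℕ → PowerSeries R) (f : ℕ → R)
    (hf : ∀ j, 2 ≤ j →
      f j = -(algebraMap ℚ R (((j : ℚ) * (1 - (j : ℚ)))⁻¹) * coeff j (D (F (j - 1)))))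
    (hFrec : ∀ j, 2 ≤ j → F j = F (j - 1) + C (f j) * X ^ j)
    (hF1 : (X : PowerSeries R) ^ 2 ∣ D (F 1)) :
    ∀ j, 1 ≤ j → (X : PowerSeries R) ^ (j + 1) ∣ D (F j) := by
  intro j hj
  induction j, hj using Nat.le_induction with
  | base => exact hF1
  | succ j hj ih =>
    have h2 : 2 ≤ j + 1 := by omega
    have hsub : j + 1 - 1 = j := rfl
    have hFe : F (j + 1) = F j + C (f (j + 1)) * X ^ (j + 1) := by
      have := hFrec (j + 1) h2
      rwa [hsub] at this
    obtain ⟨r, hr⟩ := hD (f (j + 1)) (j + 1)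
    have hDF : D (F (j + 1)) =
        D (F j) + (C (algebraMap ℚ R (((j + 1 : ℕ) : ℚ) * (1 - ((j + 1 : ℕ) : ℚ)))) *
          (C (f (j + 1)) * X ^ (j + 1)) + X ^ (j + 1 + 1) * r) := by
      rw [hFe, map_add]
      congr 1
      have : D (C (f (j + 1)) * X ^ (j + 1)) =
          C (algebraMap ℚ R ((((j : ℕ) + 1 : ℕ) : ℚ) * (1 - (((j : ℕ) + 1 : ℕ) : ℚ)))) *
            (C (f (j + 1)) * X ^ (j + 1)) + X ^ (j + 1 + 1) * r := by
        rw [← hr]; ring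
      rw [this]
    have hane : ((((j + 1 : ℕ) : ℚ)) * (1 - (((j + 1 : ℕ) : ℚ)))) ≠ 0 := by
      have : (1 : ℚ) ≤ (j : ℚ) := by exact_mod_cast hj
      push_cast
      intro h
      rcases mul_eq_zero.mp h with h1 | h1 <;> linarith
    rw [X_pow_dvd_iff]
    intro i hi
    have hzero_r : (coeff i) (X ^ (j + 1 + 1) * r : PowerSeries R) = 0 := by
      have : (X : PowerSeries R) ^ (j + 1 + 1) ∣ X ^ (j + 1 + 1) * r := ⟨r, rfl⟩
      exact (X_pow_dvd_iff.mp this) i hi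
    rw [hDF, map_add, map_add, hzero_r, add_zero, coeff_C_mul, coeff_C_mul, coeff_X_pow]
    rcases lt_or_eq_of_le (Nat.lt_succ_iff.mp hi) with hlt | heq
    · have h0 : (coeff i) (D (F j)) = 0 := (X_pow_dvd_iff.mp ih) i hlt
      rw [h0, if_neg (by omega)]
      ring
    · subst heq
      rw [if_pos rfl, mul_one]
      have hfj := hf (j + 1) h2
      rw [hsub] at hfj
      rw [hfj, mul_neg, ← mul_assoc, ← map_mul, mul_inv_cancel₀ hane, map_one,
        one_mul, add_neg_cancel]
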